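/- Bernstein division algorithm: if p(t) = Σ_{j=0}^m a_j B^m_j(t) and q(t) = Σ_{j=0}^n b_j B^n_j(t) with m ≥ n ≥ 0, p(1) = a_m ≠ 0 and q(1) = b_n ≠ 0, then there exist unique polynomials f(t) of degree ≤ m−n and r(t) of degree ≤ n−1 such that p(t) = q(t) f(t) + (1−t)^{m−n+1} r(t). -/

import Mathlib

/-!
Since `q(1) ≠ 0`, `q` is coprime to `(1 - X)^k` with `k = m - n + 1`, so `q` is invertible
modulo `(1 - X)^k`: there is a unique `f` of degree `< k` with `(1 - X)^k ∣ p - q f`, and the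
quotient `r` has degree `< n` because `p - q f` has degree `≤ m`.
-/

open Polynomial

theorem existsUnique_degree_lt_dvd_sub_mul {K : Type*} [Field K] {D Q : K[X]} (hD : D ≠ 0)
    (hDQ : IsCoprime D Q) (P : K[X]) : ∃! F : K[X], F.degree < D.degree ∧ D ∣ P - Q * F := by
  obtain ⟨u, v, huv⟩ := hDQ
  -- `v` inverts `Q` modulo `D`, so the solution is `v * P` reduced modulo `D`.
  have hdvd : D ∣ P - Q * (v * P % D) := by
    rw [EuclideanDomain.mod_eq_sub_mul_div]
    exact ⟨u * P + Q * (v * P / D), by linear_combination (-P) * huv⟩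
  refine ⟨v * P % D, ⟨degree_mod_lt _ hD, hdvd⟩, fun F ⟨hF, hDF⟩ => ?_⟩
  have hdiff : D ∣ F - v * P % D :=
    (IsCoprime.dvd_of_dvd_mul_left ⟨u, v, huv⟩ (by simpa [mul_sub] using dvd_sub hdvd hDF))
  refine sub_eq_zero.mp (eq_zero_of_dvd_of_degree_lt hdiff ?_)
  exact (degree_sub_le _ _).trans_lt (max_lt hF (degree_mod_lt _ hD))

theorem isCoprime_X_sub_C_of_eval_ne_zero {K : Type*} [Field K] {q : K[X]} {x : K}
    (h : q.eval x ≠ 0) : IsCoprime (X - C x) q :=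
  (EuclideanDomain.dvd_or_coprime _ _
    (irreducible_of_degree_eq_one (degree_X_sub_C x))).resolve_left (by rwa [dvd_iff_isRoot])

theorem degree_one_sub_X_pow {R : Type*} [CommRing R] [IsDomain R] (k : ℕ) :
    ((1 - X : R[X]) ^ k).degree = k := by
  rw [degree_pow, ← neg_sub, degree_neg, ← C_1, degree_X_sub_C, nsmul_one]

theorem degree_lt_of_eq_mul_add_mul {R : Type*} [CommRing R] [IsDomain R] {P Q F D E : R[X]}
    {d n : ℕ} (hD : D.degree = d) (hP : P.degree < ↑(d + n)) (hQ : Q.degree ≤ n)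
    (hF : F.degree < d) (h : P = Q * F + D * E) : E.degree < n := by
  have hDE : (D * E).degree < ↑(d + n) := by
    rw [show D * E = P - Q * F by rw [h]; ring]
    refine (degree_sub_le _ _).trans_lt (max_lt hP ?_)
    calc (Q * F).degree ≤ n + F.degree := (degree_mul_le _ _).trans (add_le_add_left hQ _)
      _ < n + d := WithBot.add_lt_add_left (WithBot.natCast_ne_bot n) hF
      _ = ↑(d + n) := by rw [add_comm d, Nat.cast_add]
  rw [degree_mul, hD, Nat.cast_add] at hDE
  exact (WithBot.add_lt_add_iff_left (WithBot.natCast_ne_bot d)).mp hDE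

section Bernstein

variable {R : Type*} [CommRing R]

theorem C_mul_bernsteinPolynomial (c : R) (n j : ℕ) :
    C c * bernsteinPolynomial R n j = C c * (n.choose j : R[X]) * X ^ j * (1 - X) ^ (n - j) := by
  simp only [bernsteinPolynomial, mul_assoc]

theorem degree_C_mul_bernsteinPolynomial_le (c : R) {n j : ℕ} (hj : j ≤ n) :
    (C c * bernsteinPolynomial R n j).degree ≤ n := by
  unfold bernsteinPolynomial
  compute_degree
  exact WithBot.coe_le_coe.mpr (Nat.add_sub_cancel' hj).le

theorem degree_sum_C_mul_bernsteinPolynomial_le (n : ℕ) (a : ℕ → R) :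
    (∑ j ∈ Finset.range (n + 1), C (a j) * bernsteinPolynomial R n j).degree ≤ n :=
  (degree_sum_le _ _).trans <| Finset.sup_le fun _ hj =>
    degree_C_mul_bernsteinPolynomial_le _ (Finset.mem_range_succ_iff.mp hj)

theorem eval_one_sum_C_mul_bernsteinPolynomial (n : ℕ) (a : ℕ → R) :
    (∑ j ∈ Finset.range (n + 1), C (a j) * bernsteinPolynomial R n j).eval 1 = a n := by
  simp [eval_finsetSum, bernsteinPolynomial.eval_at_1]

end Bernstein

theorem bernstein_division_general (m n : ℕ) (hmn : n ≤ m) (a b : ℕ → ℂ)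
    (hbn : b n ≠ 0) (p q : Polynomial ℂ)
    (hp : p = ∑ j ∈ Finset.range (m + 1),
        C (a j) * (m.choose j : ℂ[X]) * X ^ j * (1 - X) ^ (m - j))
    (hq : q = ∑ j ∈ Finset.range (n + 1),
        C (b j) * (n.choose j : ℂ[X]) * X ^ j * (1 - X) ^ (n - j)) :
    ∃! fr : Polynomial ℂ × Polynomial ℂ,
      fr.1.degree ≤ (m - n : ℕ) ∧ fr.2.degree < n ∧
        p = q * fr.1 + (1 - X) ^ (m - n + 1) * fr.2 := by
  simp only [← C_mul_bernsteinPolynomial] at hp hq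
  have hq1 : q.eval 1 ≠ 0 := by rwa [hq, eval_one_sum_C_mul_bernsteinPolynomial]
  have hDdeg := degree_one_sub_X_pow (R := ℂ) (m - n + 1)
  have hD0 : (1 - X : ℂ[X]) ^ (m - n + 1) ≠ 0 := fun h => by
    rw [h, degree_zero] at hDdeg; exact WithBot.natCast_ne_bot _ hDdeg.symm
  have hcop : IsCoprime ((1 - X) ^ (m - n + 1)) q := by
    simpa using (isCoprime_X_sub_C_of_eval_ne_zero hq1).neg_left.pow_left (m := m - n + 1)
  have hdeg_lt (G : ℂ[X]) : G.degree < ↑(m - n + 1) ↔ G.degree ≤ ↑(m - n) := by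
    rw [← mem_degreeLT, degreeLT_succ_eq_degreeLE, mem_degreeLE]
  obtain ⟨F, ⟨hF, R, hR⟩, hFuniq⟩ := existsUnique_degree_lt_dvd_sub_mul hD0 hcop p
  rw [hDdeg] at hF hFuniq
  have hpR : p = q * F + (1 - X) ^ (m - n + 1) * R := by rw [← hR]; ring
  have hpdeg : p.degree < ↑(m - n + 1 + n) := by
    rw [show m - n + 1 + n = m + 1 by omega, hp]
    exact (degree_sum_C_mul_bernsteinPolynomial_le m a).trans_lt
      (WithBot.coe_lt_coe.mpr m.lt_succ_self)
  refine ⟨(F, R), ⟨(hdeg_lt F).1 hF, ?_, hpR⟩, ?_⟩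
  · exact degree_lt_of_eq_mul_add_mul hDdeg hpdeg
      (hq ▸ degree_sum_C_mul_bernsteinPolynomial_le n b) hF hpR
  rintro ⟨F', R'⟩ ⟨hF', -, hpR'⟩
  obtain rfl : F' = F := hFuniq F' ⟨(hdeg_lt F').2 hF', R', by rw [hpR']; ring⟩
  exact Prod.ext rfl (mul_left_cancel₀ hD0 (by linear_combination hpR - hpR'))

/-- Bernstein division algorithm: if `p(1) ≠ 0`, `q(1) ≠ 0` and `m ≥ n`, there
exist unique polynomials `f` (degree ≤ m-n) and `r` (degree < n) with
`p = q f + (1-X)^{m-n+1} r`. -/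
theorem bernstein_division (m n : ℕ) (hmn : n ≤ m) (a b : ℕ → ℂ)
    (ham : a m ≠ 0) (hbn : b n ≠ 0) (p q : Polynomial ℂ)
    (hp : p = ∑ j ∈ Finset.range (m + 1),
        C (a j) * (m.choose j : ℂ[X]) * X ^ j * (1 - X) ^ (m - j))
    (hq : q = ∑ j ∈ Finset.range (n + 1),
        C (b j) * (n.choose j : ℂ[X]) * X ^ j * (1 - X) ^ (n - j)) :
    ∃! fr : Polynomial ℂ × Polynomial ℂ,
      fr.1.degree ≤ (m - n : ℕ) ∧ fr.2.degree < n ∧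
        p = q * fr.1 + (1 - X) ^ (m - n + 1) * fr.2 :=
  bernstein_division_general m n hmn a b hbn p q hp hq
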